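/- arXiv:1405.5981 — 3 statements merged into one kernel-verified Lean document; each statement's English description precedes it below -/
import Mathlib

section
/- Let R be a finite commutative local ring and let f(x), g(x) be nonzero polynomials in R[x] with g(x) regular. Then there exist polynomials q(x) and r(x) in R[x] with f(x) = g(x)q(x) + r(x) and either r(x) = 0 or deg(r(x)) < deg(g(x)), where the degree of a polynomial h is defined as the degree of its image in (R/M)[x]. -/
/-!
Since `R` is Artinian local, its maximal ideal `M` is nilpotent, so a regular `g` cannot have all
its coefficients in `M`. Normalising its reduction and lifting gives a monic `h` of degree
`deg (μ g)` with `h ≡ g a` modulo `M R[X]`. Division by the monic `h` then writes every `f` as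
`g q + r + (multiple of M)` with `deg r < deg h`, i.e. `R[X] = S + M • R[X]` for the `R`-submodule
`S = g R[X] + R[X]_{< deg h}`; nilpotency of `M` turns this into `R[X] = S`.
-/

open Polynomial IsLocalRing

theorem Submodule.le_of_le_sup_smul_of_isNilpotent {R M : Type*} [CommSemiring R]
    [AddCommMonoid M] [Module R M] {I : Ideal R} (hI : IsNilpotent I) {N N' : Submodule R M}
    (h : N' ≤ N ⊔ I • N') : N' ≤ N := by
  obtain ⟨k, hk⟩ := hI
  have key : ∀ j : ℕ, N' ≤ N ⊔ I ^ j • N' := by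
    intro j
    induction j with
    | zero => simp
    | succ j ih =>
      calc N' ≤ N ⊔ I ^ j • (N ⊔ I • N') :=
            ih.trans (sup_le_sup_left (Submodule.smul_mono le_rfl h) _)
        _ = N ⊔ (I ^ j • N ⊔ I ^ (j + 1) • N') := by
          rw [Submodule.smul_sup, pow_succ, Submodule.mul_smul]
        _ ≤ N ⊔ I ^ (j + 1) • N' := by
          rw [← sup_assoc, sup_eq_left.mpr (Submodule.smul_le_right : I ^ j • N ≤ N)]
  simpa [hk] using key k

theorem Polynomial.map_mk_ne_zero_of_mem_nonZeroDivisors {R : Type*} [CommRing R] [Nontrivial R]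
    {I : Ideal R} (hI : IsNilpotent I) {g : R[X]} (hg : g ∈ nonZeroDivisors R[X]) :
    g.map (Ideal.Quotient.mk I) ≠ 0 := by
  intro h0
  obtain ⟨k, hk⟩ := hI
  have hgI : g ∈ I.map C := by
    rw [← Ideal.mk_ker (I := I), ← ker_mapRingHom]
    exact h0
  have : g ^ k = 0 := by
    simpa [← Ideal.map_pow, hk] using Ideal.pow_mem_pow hgI k
  exact zero_notMem_nonZeroDivisors (this ▸ pow_mem hg k)

theorem Polynomial.exists_monic_sub_mul_C_mem_map_C {R : Type*} [CommRing R] (I : Ideal R)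
    [I.IsMaximal] {g : R[X]} (hg : g.map (Ideal.Quotient.mk I) ≠ 0) :
    ∃ h : R[X], h.Monic ∧ h.degree = (g.map (Ideal.Quotient.mk I)).degree ∧
      ∃ a : R, h - g * C a ∈ I.map C := by
  let := Ideal.Quotient.field I
  set μ := Ideal.Quotient.mk I
  obtain ⟨a, ha⟩ := Ideal.Quotient.mk_surjective (g.map μ).leadingCoeff⁻¹
  obtain ⟨h, hmap, hdeg, hmonic⟩ := lifts_and_degree_eq_and_monic
    (mem_lifts_of_surjective Ideal.Quotient.mk_surjective
      (g.map μ * C (g.map μ).leadingCoeff⁻¹))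
    (monic_mul_leadingCoeff_inv hg)
  refine ⟨h, hmonic, hdeg.trans (degree_mul_leadingCoeff_inv _ hg), a, ?_⟩
  rw [← Ideal.mk_ker (I := I), ← ker_mapRingHom, RingHom.mem_ker]
  simp [hmap, ha, μ]

theorem Polynomial.exists_eq_mul_add_degree_lt_of_sub_mul_C_mem_map_C {R : Type*} [CommRing R]
    [Nontrivial R] {I : Ideal R} (hI : IsNilpotent I) {g h : R[X]} (hh : h.Monic) {a : R}
    (hgh : h - g * C a ∈ I.map C) (f : R[X]) :
    ∃ q r : R[X], f = g * q + r ∧ r.degree < h.degree := by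
  let S : Submodule R R[X] := (Ideal.span {g}).restrictScalars R ⊔ degreeLT R h.natDegree
  have hS : ⊤ ≤ S ⊔ I • ⊤ := by
    intro f _
    have hdiv : f = (g * (C a * (f /ₘ h)) + f %ₘ h) + (h - g * C a) * (f /ₘ h) := by
      linear_combination (modByMonic_add_div f h).symm
    rw [hdiv, Ideal.smul_top_eq_map, algebraMap_eq]
    refine Submodule.add_mem_sup (Submodule.add_mem_sup ?_ ?_) (Ideal.mul_mem_right _ _ hgh)
    · exact Ideal.mul_mem_right _ _ (Ideal.mem_span_singleton_self g)
    · rw [mem_degreeLT, ← degree_eq_natDegree hh.ne_zero]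
      exact degree_modByMonic_lt f hh
  obtain ⟨p, hp, r, hr, rfl⟩ := Submodule.mem_sup.mp
    (Submodule.le_of_le_sup_smul_of_isNilpotent hI hS (Submodule.mem_top (x := f)))
  obtain ⟨q, rfl⟩ := Ideal.mem_span_singleton'.mp hp
  rw [mem_degreeLT, ← degree_eq_natDegree hh.ne_zero] at hr
  exact ⟨q, r, by ring, hr⟩

theorem stmt_3_general (R : Type*) [CommRing R] [Finite R] [IsLocalRing R]
    (f g : Polynomial R) (hg : g ∈ nonZeroDivisors (Polynomial R)) :
    ∃ q r : Polynomial R, f = g * q + r ∧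
      (r = 0 ∨ (r.map (Ideal.Quotient.mk (IsLocalRing.maximalIdeal R))).degree <
        (g.map (Ideal.Quotient.mk (IsLocalRing.maximalIdeal R))).degree) := by
  have hM : IsNilpotent (maximalIdeal R) := by
    rw [← jacobson_eq_maximalIdeal ⊥ bot_ne_top]
    exact IsArtinianRing.isNilpotent_jacobson_bot
  obtain ⟨h, hh, hdeg, a, hgh⟩ := exists_monic_sub_mul_C_mem_map_C (maximalIdeal R)
    (map_mk_ne_zero_of_mem_nonZeroDivisors hM hg)
  obtain ⟨q, r, hfqr, hr⟩ := exists_eq_mul_add_degree_lt_of_sub_mul_C_mem_map_C hM hh hgh f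
  exact ⟨q, r, hfqr, .inr (hdeg ▸ degree_map_le.trans_lt hr)⟩

/-- Division algorithm over a finite commutative local ring: for nonzero
`f, g` with `g` regular there are `q, r` with `f = g q + r` and `r = 0` or
`deg r < deg g`, where the degree is that of the reduction modulo the maximal ideal. -/
theorem stmt_3 (R : Type*) [CommRing R] [Finite R] [IsLocalRing R]
    (f g : Polynomial R) (hf : f ≠ 0) (hg : g ∈ nonZeroDivisors (Polynomial R)) :
    ∃ q r : Polynomial R, f = g * q + r ∧
      (r = 0 ∨ (r.map (Ideal.Quotient.mk (IsLocalRing.maximalIdeal R))).degree <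
        (g.map (Ideal.Quotient.mk (IsLocalRing.maximalIdeal R))).degree) :=
  stmt_3_general R f g hg
end

section
/- Every nonzero polynomial of the form g(x) + u p_1(x) + v p_2(x) + uv p_3(x) in R[x], where R = Z_p[u,v]/(u^2,v^2,uv-vu) and g(x) is a nonzero polynomial over Z_p, is regular (not a zero divisor) in R[x]. -/
/-- The ring `Z_p[u,v]/(u^2, v^2, uv - vu)` (the last relation is automatic since
we work with commutative polynomials). -/
abbrev Rp (p : ℕ) : Type :=
  MvPolynomial (Fin 2) (ZMod p) ⧸
    Ideal.span {(MvPolynomial.X 0 : MvPolynomial (Fin 2) (ZMod p)) ^ 2, (MvPolynomial.X 1) ^ 2}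

/-- The image of `u` in `Rp p`. -/
noncomputable def uR (p : ℕ) : Rp p := Ideal.Quotient.mk _ (MvPolynomial.X 0)

/-- The image of `v` in `Rp p`. -/
noncomputable def vR (p : ℕ) : Rp p := Ideal.Quotient.mk _ (MvPolynomial.X 1)

/-!
By McCoy's theorem a polynomial over a commutative ring is a zero divisor only if some
nonzero constant annihilates it, so a polynomial with a unit coefficient is regular.
If `g` has a nonzero coefficient in degree `i`, then the degree-`i` coefficient of
`g + u p₁ + v p₂ + uv p₃` is a unit of `Z_p` plus an element of the ideal `(u, v)`,
which consists of nilpotents; hence it is a unit.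
-/

lemma uR_mem_nilradical (p : ℕ) : uR p ∈ nilradical (Rp p) := by
  refine mem_nilradical.mpr ⟨2, ?_⟩
  rw [uR, ← map_pow, Ideal.Quotient.eq_zero_iff_mem]
  exact Ideal.subset_span (by simp)

lemma vR_mem_nilradical (p : ℕ) : vR p ∈ nilradical (Rp p) := by
  refine mem_nilradical.mpr ⟨2, ?_⟩
  rw [vR, ← map_pow, Ideal.Quotient.eq_zero_iff_mem]
  exact Ideal.subset_span (by simp)

lemma isUnit_algebraMap_add_uR_vR {p : ℕ} [Fact p.Prime] {r : ZMod p} (hr : r ≠ 0)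
    (a b c : Rp p) :
    IsUnit (algebraMap (ZMod p) (Rp p) r + uR p * a + vR p * b + uR p * vR p * c) := by
  have hnil : uR p * a + vR p * b + uR p * vR p * c ∈ nilradical (Rp p) :=
    add_mem (add_mem (Ideal.mul_mem_right _ _ (uR_mem_nilradical p))
      (Ideal.mul_mem_right _ _ (vR_mem_nilradical p)))
      (Ideal.mul_mem_right _ _ (Ideal.mul_mem_right _ _ (uR_mem_nilradical p)))
  simpa only [add_assoc] using (mem_nilradical.mp hnil).isUnit_add_left_of_commute
    ((IsUnit.mk0 r hr).map (algebraMap (ZMod p) (Rp p))) (Commute.all _ _)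

/-- For a nonzero `g ∈ Z_p[x]` and arbitrary `p₁, p₂, p₃ ∈ Z_p[x]`, the
polynomial `g(x) + u p₁(x) + v p₂(x) + uv p₃(x)` is regular (a non zero divisor) in
`R[x]` where `R = Z_p[u,v]/(u^2,v^2,uv-vu)`. -/
theorem stmt_7 (p : ℕ) [Fact p.Prime] (g p₁ p₂ p₃ : Polynomial (ZMod p)) (hg : g ≠ 0) :
    (g.map (algebraMap (ZMod p) (Rp p))
      + Polynomial.C (uR p) * p₁.map (algebraMap (ZMod p) (Rp p))
      + Polynomial.C (vR p) * p₂.map (algebraMap (ZMod p) (Rp p))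
      + Polynomial.C (uR p * vR p) * p₃.map (algebraMap (ZMod p) (Rp p)))
      ∈ nonZeroDivisors (Polynomial (Rp p)) := by
  obtain ⟨i, hi⟩ : ∃ i, g.coeff i ≠ 0 := by
    by_contra! h
    exact hg (Polynomial.ext h)
  refine Polynomial.mem_nonzeroDivisors_of_coeff_mem i (IsUnit.mem_nonZeroDivisors ?_)
  simpa only [Polynomial.coeff_add, Polynomial.coeff_C_mul, Polynomial.coeff_map, mul_assoc]
    using isUnit_algebraMap_add_uR_vR hi _ _ _
end

section
/- If C is a cyclic code of length n over R = Z_p[u,v]/(u^2,v^2,uv-vu), then its Gray image phi_L(C) is a 4-quasi-cyclic linear code of length 4n over Z_p, i.e., phi_L(C) is invariant under the fourth power of the cyclic shift on Z_p^{4n}. -/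
/-!
Every element of `R` can be written `a + b u + c v + d uv` with `a, b, c, d ∈ Z_p`, and these
coordinates add and scale coordinatewise; since `φ_L` is a linear formula in them, it is
`Z_p`-linear. Hence `φ_L(C)` is the image of the `Z_p`-subspace `C` under a linear map. Each
coordinate of `R^n` becomes a block of four consecutive coordinates of `Z_p^{4n}`, so the
cyclic shift of `R^n` is carried to the shift by four positions, and `C` being cyclic makes
`φ_L(C)` invariant under `T^4`.
-/

namespace Rp

variable {p : ℕ}

noncomputable def ofCoeffs (a b c d : ZMod p) : Rp p :=
  algebraMap (ZMod p) (Rp p) a + algebraMap (ZMod p) (Rp p) b * uR p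
    + algebraMap (ZMod p) (Rp p) c * vR p + algebraMap (ZMod p) (Rp p) d * (uR p * vR p)

lemma uR_mul_self : uR p * uR p = 0 := by
  rw [uR, ← map_mul, ← sq, Ideal.Quotient.eq_zero_iff_mem]
  exact Ideal.subset_span (by simp)

lemma vR_mul_self : vR p * vR p = 0 := by
  rw [vR, ← map_mul, ← sq, Ideal.Quotient.eq_zero_iff_mem]
  exact Ideal.subset_span (by simp)

lemma ofCoeffs_add_ofCoeffs (a b c d a' b' c' d' : ZMod p) :
    ofCoeffs a b c d + ofCoeffs a' b' c' d' = ofCoeffs (a + a') (b + b') (c + c') (d + d') := by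
  simp only [ofCoeffs, map_add]
  ring

lemma smul_ofCoeffs (z a b c d : ZMod p) :
    z • ofCoeffs a b c d = ofCoeffs (z * a) (z * b) (z * c) (z * d) := by
  rw [← algebraMap_smul (Rp p) z, smul_eq_mul]
  simp only [ofCoeffs, map_mul]
  ring

lemma ofCoeffs_mul_uR (a b c d : ZMod p) : ofCoeffs a b c d * uR p = ofCoeffs 0 a 0 c := by
  simp only [ofCoeffs, map_zero]
  linear_combination (algebraMap (ZMod p) (Rp p) b + algebraMap (ZMod p) (Rp p) d * vR p) *
    uR_mul_self

lemma ofCoeffs_mul_vR (a b c d : ZMod p) : ofCoeffs a b c d * vR p = ofCoeffs 0 0 a b := by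
  simp only [ofCoeffs, map_zero]
  linear_combination (algebraMap (ZMod p) (Rp p) c + algebraMap (ZMod p) (Rp p) d * uR p) *
    vR_mul_self

lemma exists_ofCoeffs_eq (x : Rp p) : ∃ a b c d, ofCoeffs a b c d = x := by
  obtain ⟨q, rfl⟩ := Ideal.Quotient.mk_surjective x
  induction q using MvPolynomial.induction_on with
  | C a => exact ⟨a, 0, 0, 0, by simp only [ofCoeffs, map_zero, zero_mul, add_zero]; rfl⟩
  | add f g hf hg =>
    obtain ⟨a, b, c, d, hf⟩ := hf
    obtain ⟨a', b', c', d', hg⟩ := hg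
    exact ⟨a + a', b + b', c + c', d + d', by rw [← ofCoeffs_add_ofCoeffs, hf, hg, map_add]⟩
  | mul_X f i hf =>
    obtain ⟨a, b, c, d, hf⟩ := hf
    rw [map_mul, ← hf]
    fin_cases i
    · exact ⟨_, _, _, _, (ofCoeffs_mul_uR a b c d).symm⟩
    · exact ⟨_, _, _, _, (ofCoeffs_mul_vR a b c d).symm⟩

lemma isLinearMap_of_gray (gray : Rp p → Fin 4 → ZMod p)
    (hgray : ∀ a b c d, gray (ofCoeffs a b c d) = ![a + b + c + d, c + d, b + d, d]) :
    IsLinearMap (ZMod p) gray where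
  map_add x y := by
    obtain ⟨a, b, c, d, rfl⟩ := exists_ofCoeffs_eq x
    obtain ⟨a', b', c', d', rfl⟩ := exists_ofCoeffs_eq y
    rw [ofCoeffs_add_ofCoeffs, hgray, hgray, hgray]
    simp only [Matrix.cons_add_cons, Matrix.empty_add_empty]
    ring_nf
  map_smul z x := by
    obtain ⟨a, b, c, d, rfl⟩ := exists_ofCoeffs_eq x
    rw [smul_ofCoeffs, hgray, hgray]
    simp only [Matrix.smul_cons, Matrix.smul_empty, smul_eq_mul]
    ring_nf

end Rp

section BlockFlatten

variable {k n : ℕ}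

def blockFlatten {α : Type*} (y : Fin n → Fin k → α) (j : Fin (k * n)) : α :=
  y ⟨j / k, Nat.div_lt_of_lt_mul j.isLt⟩ ⟨j % k, Nat.mod_lt _ (Nat.pos_of_lt_mul_right j.isLt)⟩

variable (R : Type*) (k n) in
def blockFlattenₗ [Semiring R] : (Fin n → Fin k → R) →ₗ[R] (Fin (k * n) → R) where
  toFun := blockFlatten
  map_add' _ _ := rfl
  map_smul' _ _ := rfl

variable [NeZero (k * n)]

/-- `Fin.ofNat (k * n) k` is what the numeral `k` elaborates to in `Fin (k * n)`. -/
lemma val_sub_ofNat_eq (j : Fin (k * n)) :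
    ((j - Fin.ofNat (k * n) k : Fin (k * n)) : ℕ) = (k * (n - 1 % n) + j) % (k * n) := by
  have hk : k % (k * n) = k * (1 % n) := by rw [← Nat.mul_mod_mul_left, Nat.mul_one]
  rw [Fin.val_sub, Fin.val_ofNat, hk, ← Nat.mul_sub]

variable [NeZero n] in
lemma blockFlatten_comp_sub_one {α : Type*} (y : Fin n → Fin k → α) (j : Fin (k * n)) :
    blockFlatten (fun i => y (i - 1)) j = blockFlatten y (j - Fin.ofNat (k * n) k) := by
  have hk : 0 < k := Nat.pos_of_lt_mul_right j.isLt
  have hdiv : ((j - Fin.ofNat (k * n) k : Fin (k * n)) : ℕ) / k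
      = ((⟨j / k, Nat.div_lt_of_lt_mul j.isLt⟩ - 1 : Fin n) : ℕ) := by
    rw [val_sub_ofNat_eq, Nat.mod_mul_right_div_self, Nat.mul_add_div hk, Fin.val_sub,
      Fin.val_one']
  have hmod : ((j - Fin.ofNat (k * n) k : Fin (k * n)) : ℕ) % k = j % k := by
    rw [val_sub_ofNat_eq, Nat.mod_mul_right_mod, Nat.mul_add_mod]
  simp only [blockFlatten, hdiv, hmod, Fin.eta]

end BlockFlatten

/-- If `C` is a cyclic code of length `n` over
`R = Z_p[u,v]/(u^2,v^2,uv-vu)`, then its Gray image `φ_L(C)` is a linear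
`4`-quasi-cyclic code of length `4n` over `Z_p`, i.e. a `Z_p`-subspace invariant
under the fourth power of the cyclic shift. -/
theorem stmt_12 (p n : ℕ) [NeZero n] [NeZero (4 * n)]
    (gray : Rp p → (Fin 4 → ZMod p))
    (hgray : ∀ a b c d : ZMod p,
      gray (algebraMap (ZMod p) (Rp p) a + algebraMap (ZMod p) (Rp p) b * uR p
          + algebraMap (ZMod p) (Rp p) c * vR p
          + algebraMap (ZMod p) (Rp p) d * (uR p * vR p))
        = ![a + b + c + d, c + d, b + d, d])
    (C : Submodule (Rp p) (Fin n → Rp p))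
    (hcyc : ∀ x ∈ C, (fun i => x (i - 1)) ∈ C) :
    ∃ D : Submodule (ZMod p) (Fin (4 * n) → ZMod p),
      (D : Set (Fin (4 * n) → ZMod p))
        = (fun (x : Fin n → Rp p) (j : Fin (4 * n)) =>
            gray (x ⟨j.val / 4, by have := j.isLt; omega⟩) ⟨j.val % 4, by omega⟩) ''
            (C : Set (Fin n → Rp p)) ∧
      ∀ y ∈ D, (fun j => y (j - 4)) ∈ D := by
  let grayₗ := IsLinearMap.mk' gray (Rp.isLinearMap_of_gray gray hgray)
  let Φ := blockFlattenₗ 4 n (ZMod p) ∘ₗ grayₗ.compLeft (Fin n)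
  refine ⟨(C.restrictScalars (ZMod p)).map Φ, by rw [Submodule.map_coe]; rfl, ?_⟩
  rintro _ ⟨x, hx, rfl⟩
  exact ⟨fun i => x (i - 1), hcyc x hx, funext fun j => blockFlatten_comp_sub_one (gray ∘ x) j⟩
end
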